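/- Suppose the n×p matrix X satisfies RE(s,3,X) with constant K = K(s,3,X) > 0, Y = Xβ + ε with |supp(β)| = |S| ≤ s, ‖X_j‖₂ ≤ (1+θ)√n, and β̂ is a Lasso solution with penalty λ_n where ‖X^Tε/n‖_∞ ≤ λ_n/2. Then υ = β̂ − β satisfies: ‖υ_S‖₂ ≤ 4K²λ_n√s, ‖υ‖₁ ≤ 4K²λ_n s, and ‖υ‖₂ ≤ 8K²λ_n√s. -/

import Mathlib

open Finset

noncomputable def l1 {p : ℕ} (v : Fin p → ℝ) : ℝ := ∑ i, |v i|
noncomputable def l2 {n : ℕ} (v : Fin n → ℝ) : ℝ := Real.sqrt (∑ i, (v i) ^ 2)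

def restr {p : ℕ} (T : Finset (Fin p)) (v : Fin p → ℝ) : Fin p → ℝ :=
  fun i => if i ∈ T then v i else 0

/-!
Write `υ = β̂ - β`. Comparing the Lasso objective at `β̂` and at `β`, and bounding the noise term
by `‖Xᵀε/n‖_∞ ‖υ‖₁ ≤ λ‖υ‖₁/2`, gives `‖Xυ‖₂²/n + λ‖υ‖₁ ≤ 4λ‖υ_S‖₁ ≤ 4λ√s‖υ_S‖₂`; in particular
`υ` lies in the cone `‖υ_{Sᶜ}‖₁ ≤ 3‖υ_S‖₁`, where the restricted eigenvalue condition gives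
`‖υ_S‖₂ ≤ K‖Xυ‖₂/√n`. These two inequalities, quadratic in `t = ‖Xυ‖₂/√n`, yield the bounds on
`‖υ_S‖₂` and `‖υ‖₁`. For `‖υ‖₂`, let `T₀` carry the `s` largest coordinates of `|υ|`: `υ` is
still in the cone over `T₀`, which bounds `‖υ_{T₀}‖₂`, and every coordinate off `T₀` is at most
`‖υ‖₁/s`, so `‖υ_{T₀ᶜ}‖₂ ≤ ‖υ‖₁/√s`.
-/

def RestrictedEigenvalue {n p : ℕ} (X : Matrix (Fin n) (Fin p) ℝ) (s : ℕ) (k₀ K : ℝ) : Prop :=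
  ∀ J0 : Finset (Fin p), J0.card ≤ s → ∀ v : Fin p → ℝ, v ≠ 0 →
    l1 (restr J0ᶜ v) ≤ k₀ * l1 (restr J0 v) →
    Real.sqrt n * l2 (restr J0 v) ≤ K * l2 (X.mulVec v)

section Norms

variable {p : ℕ}

lemma l1_nonneg (v : Fin p → ℝ) : 0 ≤ l1 v :=
  sum_nonneg fun _ _ => abs_nonneg _

lemma l2_nonneg (v : Fin p → ℝ) : 0 ≤ l2 v :=
  Real.sqrt_nonneg _

lemma sq_l2 (v : Fin p → ℝ) : l2 v ^ 2 = ∑ i, v i ^ 2 :=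
  Real.sq_sqrt (sum_nonneg fun _ _ => sq_nonneg _)

lemma l2_zero : l2 (0 : Fin p → ℝ) = 0 := by
  simp [l2]

lemma l1_restr (T : Finset (Fin p)) (v : Fin p → ℝ) : l1 (restr T v) = ∑ j ∈ T, |v j| := by
  simp [l1, restr, apply_ite abs, sum_ite_mem]

lemma sq_l2_restr (T : Finset (Fin p)) (v : Fin p → ℝ) :
    l2 (restr T v) ^ 2 = ∑ j ∈ T, v j ^ 2 := by
  simp [sq_l2, restr, apply_ite (· ^ 2), sum_ite_mem]

lemma l1_restr_add_l1_restr_compl (T : Finset (Fin p)) (v : Fin p → ℝ) :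
    l1 (restr T v) + l1 (restr Tᶜ v) = l1 v := by
  rw [l1_restr, l1_restr, sum_add_sum_compl, l1]

lemma l1_restr_le (T : Finset (Fin p)) (v : Fin p → ℝ) : l1 (restr T v) ≤ l1 v := by
  linarith [l1_restr_add_l1_restr_compl T v, l1_nonneg (restr Tᶜ v)]

lemma l2_le_l2_restr_add_l2_restr_compl (T : Finset (Fin p)) (v : Fin p → ℝ) :
    l2 v ≤ l2 (restr T v) + l2 (restr Tᶜ v) := by
  have hsplit : l2 v ^ 2 = l2 (restr T v) ^ 2 + l2 (restr Tᶜ v) ^ 2 := by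
    rw [sq_l2, sq_l2_restr, sq_l2_restr, sum_add_sum_compl]
  have hT := l2_nonneg (restr T v)
  have hTc := l2_nonneg (restr Tᶜ v)
  rw [← pow_le_pow_iff_left₀ (l2_nonneg v) (add_nonneg hT hTc) two_ne_zero, hsplit]
  nlinarith [mul_nonneg hT hTc]

lemma l1_restr_le_sqrt_card_mul_l2_restr (T : Finset (Fin p)) (v : Fin p → ℝ) :
    l1 (restr T v) ≤ Real.sqrt T.card * l2 (restr T v) := by
  rw [← pow_le_pow_iff_left₀ (l1_nonneg _) (mul_nonneg (Real.sqrt_nonneg _) (l2_nonneg _))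
    two_ne_zero, mul_pow,
    Real.sq_sqrt (Nat.cast_nonneg _), l1_restr, sq_l2_restr]
  simpa only [sq_abs] using sq_sum_le_card_mul_sum_sq (s := T) (f := fun j => |v j|)

lemma dotProduct_le_mul_l1 {u v : Fin p → ℝ} {c : ℝ} (hu : ∀ j, |u j| ≤ c) :
    u ⬝ᵥ v ≤ c * l1 v := by
  rw [l1, mul_sum]
  refine sum_le_sum fun j _ => ?_
  calc u j * v j ≤ |u j| * |v j| := by rw [← abs_mul]; exact le_abs_self _
    _ ≤ c * |v j| := mul_le_mul_of_nonneg_right (hu j) (abs_nonneg _)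

lemma sq_l2_sub (u w : Fin p → ℝ) : l2 (u - w) ^ 2 = l2 u ^ 2 - 2 * (u ⬝ᵥ w) + l2 w ^ 2 := by
  simp only [sq_l2, dotProduct, Pi.sub_apply, mul_sum, ← sum_sub_distrib, ← sum_add_distrib]
  exact sum_congr rfl fun _ _ => by ring

lemma l2_restr_compl_le_l1_div_sqrt {T : Finset (Fin p)} {v : Fin p → ℝ} {c : ℝ} (hc : 0 < c)
    (hT : ∀ j ∉ T, c * |v j| ≤ l1 v) : l2 (restr Tᶜ v) ≤ l1 v / Real.sqrt c := by
  have hpoint : ∀ j ∈ Tᶜ, v j ^ 2 ≤ |v j| * (l1 v / c) := fun j hj => by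
    rw [← sq_abs, sq]
    exact mul_le_mul_of_nonneg_left
      ((le_div_iff₀' hc).mpr (hT j (mem_compl.mp hj))) (abs_nonneg _)
  rw [← pow_le_pow_iff_left₀ (l2_nonneg _) (div_nonneg (l1_nonneg v) (Real.sqrt_nonneg c))
    two_ne_zero, div_pow, Real.sq_sqrt hc.le, sq_l2_restr]
  calc ∑ j ∈ Tᶜ, v j ^ 2 ≤ (∑ j ∈ Tᶜ, |v j|) * (l1 v / c) := by
        rw [sum_mul]; exact sum_le_sum hpoint
    _ ≤ l1 v * (l1 v / c) := by
        rw [← l1_restr]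
        exact mul_le_mul_of_nonneg_right (l1_restr_le _ _) (div_nonneg (l1_nonneg v) hc.le)
    _ = l1 v ^ 2 / c := by ring

end Norms

section MaxSum

variable {ι : Type*}

lemma Finset.exists_card_eq_forall_card_eq_sum_le [Fintype ι] (f : ι → ℝ) {s : ℕ}
    (hs : s ≤ Fintype.card ι) :
    ∃ T : Finset ι, T.card = s ∧
      ∀ T' : Finset ι, T'.card = T.card → ∑ i ∈ T', f i ≤ ∑ i ∈ T, f i := by
  have hne : (univ.powersetCard s : Finset (Finset ι)).Nonempty :=
    powersetCard_nonempty.mpr (by simpa using hs)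
  obtain ⟨T, hT, hmax⟩ := exists_max_image _ (fun T => ∑ i ∈ T, f i) hne
  have hTcard : T.card = s := (mem_powersetCard.mp hT).2
  exact ⟨T, hTcard, fun T' hT' =>
    hmax T' (mem_powersetCard.mpr ⟨subset_univ _, hT'.trans hTcard⟩)⟩

variable [DecidableEq ι] {f : ι → ℝ} {T : Finset ι}

lemma le_of_forall_card_eq_sum_le
    (hT : ∀ T' : Finset ι, T'.card = T.card → ∑ i ∈ T', f i ≤ ∑ i ∈ T, f i)
    {i j : ι} (hi : i ∈ T) (hj : j ∉ T) : f j ≤ f i := by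
  have hj' : j ∉ T.erase i := fun h => hj (mem_of_mem_erase h)
  have hswap := hT (insert j (T.erase i)) (by
    rw [card_insert_of_notMem hj', card_erase_of_mem hi]
    exact Nat.sub_add_cancel (card_pos.mpr ⟨i, hi⟩))
  rw [sum_insert hj', ← add_sum_erase T f hi] at hswap
  linarith

lemma card_mul_le_sum_of_forall_card_eq_sum_le
    (hT : ∀ T' : Finset ι, T'.card = T.card → ∑ i ∈ T', f i ≤ ∑ i ∈ T, f i)
    {j : ι} (hj : j ∉ T) : T.card * f j ≤ ∑ i ∈ T, f i := by
  rw [← nsmul_eq_mul]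
  exact card_nsmul_le_sum _ _ _ fun i hi => le_of_forall_card_eq_sum_le hT hi hj

lemma sum_le_of_card_le_of_forall_card_eq_sum_le (hf : ∀ i, 0 ≤ f i)
    (hT : ∀ T' : Finset ι, T'.card = T.card → ∑ i ∈ T', f i ≤ ∑ i ∈ T, f i)
    {S : Finset ι} (hS : S.card ≤ T.card) : ∑ i ∈ S, f i ≤ ∑ i ∈ T, f i := by
  obtain ⟨U, hSU, -, hU⟩ :=
    exists_subsuperset_card_eq subset_union_left hS (card_le_card subset_union_right)
  exact (sum_le_sum_of_subset_of_nonneg hSU fun i _ _ => hf i).trans (hT U hU)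

end MaxSum

lemma exists_card_eq_cone_and_l2_restr_compl_le {p s : ℕ} (hs : 0 < s) (hsp : s ≤ p)
    {v : Fin p → ℝ} {S : Finset (Fin p)} (hS : S.card ≤ s) {k₀ : ℝ} (hk₀ : 0 ≤ k₀)
    (hcone : l1 (restr Sᶜ v) ≤ k₀ * l1 (restr S v)) :
    ∃ T : Finset (Fin p), T.card = s ∧ l1 (restr Tᶜ v) ≤ k₀ * l1 (restr T v) ∧
      l2 (restr Tᶜ v) ≤ l1 v / Real.sqrt s := by
  obtain ⟨T, hTcard, hT⟩ :=
    exists_card_eq_forall_card_eq_sum_le (fun j => |v j|) (by simpa using hsp)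
  have hST : l1 (restr S v) ≤ l1 (restr T v) := by
    rw [l1_restr, l1_restr]
    exact sum_le_of_card_le_of_forall_card_eq_sum_le (fun j => abs_nonneg _) hT (hTcard ▸ hS)
  refine ⟨T, hTcard, ?_, l2_restr_compl_le_l1_div_sqrt (by exact_mod_cast hs) fun j hj => ?_⟩
  · linarith [l1_restr_add_l1_restr_compl S v, l1_restr_add_l1_restr_compl T v,
      mul_le_mul_of_nonneg_left hST hk₀]
  · have := card_mul_le_sum_of_forall_card_eq_sum_le hT hj
    rw [hTcard, ← l1_restr] at this
    exact this.trans (l1_restr_le T v)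

section Lasso

open Matrix

lemma RestrictedEigenvalue.l2_restr_le {n p s : ℕ} {X : Matrix (Fin n) (Fin p) ℝ} {k₀ K : ℝ}
    (hRE : RestrictedEigenvalue X s k₀ K) (hn : 0 < n) {J0 : Finset (Fin p)} (hJ0 : J0.card ≤ s)
    {v : Fin p → ℝ} (hcone : l1 (restr J0ᶜ v) ≤ k₀ * l1 (restr J0 v)) :
    l2 (restr J0 v) ≤ K * (l2 (X *ᵥ v) / Real.sqrt n) := by
  rcases eq_or_ne v 0 with rfl | hv
  · have : restr J0 (0 : Fin p → ℝ) = 0 := funext fun i => by simp [restr]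
    simp [this, l2_zero]
  · rw [← mul_div_assoc, le_div_iff₀' (Real.sqrt_pos.mpr (by exact_mod_cast hn))]
    exact hRE J0 hJ0 v hv hcone

lemma l1_sub_l1_le {p : ℕ} {β βhat : Fin p → ℝ} {S : Finset (Fin p)} (hβ : ∀ j ∉ S, β j = 0) :
    l1 β - l1 βhat ≤ l1 (restr S (βhat - β)) - l1 (restr Sᶜ (βhat - β)) := by
  simp only [l1, ← sum_sub_distrib]
  refine sum_le_sum fun j _ => ?_
  by_cases hj : j ∈ S
  · simpa [restr, hj, abs_sub_comm] using abs_sub_abs_le_abs_sub (β j) (βhat j)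
  · simp [restr, hj, hβ j hj]

lemma lasso_prediction_error_add_l1_le {n p : ℕ} (hn : 0 < n) {X : Matrix (Fin n) (Fin p) ℝ}
    {β βhat : Fin p → ℝ} {ε Y : Fin n → ℝ} {lam : ℝ} (hlam : 0 ≤ lam) {S : Finset (Fin p)}
    (hY : Y = X *ᵥ β + ε) (hβ : ∀ j ∉ S, β j = 0)
    (hopt : (1 / (2 * n)) * l2 (Y - X *ᵥ βhat) ^ 2 + lam * l1 βhat ≤
      (1 / (2 * n)) * l2 (Y - X *ᵥ β) ^ 2 + lam * l1 β)
    (hnoise : ∀ j, |(∑ i, X i j * ε i) / n| ≤ lam / 2) :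
    l2 (X *ᵥ (βhat - β)) ^ 2 / n + lam * l1 (βhat - β) ≤ 4 * lam * l1 (restr S (βhat - β)) := by
  have hn' : (0 : ℝ) < n := by exact_mod_cast hn
  set υ := βhat - β
  have hresid : Y - X *ᵥ βhat = ε - X *ᵥ υ := by
    rw [hY, Matrix.mulVec_sub]; abel
  have hbasic : l2 (X *ᵥ υ) ^ 2 / n ≤ 2 * (ε ⬝ᵥ X *ᵥ υ) / n + 2 * lam * (l1 β - l1 βhat) := by
    rw [hresid, show Y - X *ᵥ β = ε by rw [hY]; abel, sq_l2_sub] at hopt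
    field_simp at hopt ⊢
    linarith
  have hdot : ε ⬝ᵥ X *ᵥ υ ≤ n * lam / 2 * l1 υ := by
    rw [Matrix.dotProduct_mulVec, ← Matrix.mulVec_transpose]
    refine dotProduct_le_mul_l1 fun j => ?_
    have := hnoise j
    rw [abs_div, Nat.abs_cast, div_le_iff₀ hn'] at this
    exact this.trans_eq (by ring)
  have hpen : lam * (l1 β - l1 βhat) ≤ lam * (l1 (restr S υ) - l1 (restr Sᶜ υ)) :=
    mul_le_mul_of_nonneg_left (l1_sub_l1_le hβ) hlam
  have hnoise' : 2 * (ε ⬝ᵥ X *ᵥ υ) / n ≤ lam * l1 υ := by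
    rw [div_le_iff₀ hn']; linarith
  rw [← l1_restr_add_l1_restr_compl S υ] at hnoise' ⊢
  linarith

/-- Applied with `t = ‖Xυ‖₂/√n`, `r = ‖υ_S‖₂`, `L = ‖υ‖₁`, `σ = √s`; the bound on `L` completes
the square `4λσKt - t² ≤ (2λσK)²`. -/
lemma bounds_of_sq_add_le_of_le_mul {t r L lam K σ : ℝ} (ht : 0 ≤ t) (hL : 0 ≤ L)
    (hlam : 0 < lam) (hK : 0 ≤ K) (hσ : 0 ≤ σ)
    (hbasic : t ^ 2 + lam * L ≤ 4 * lam * σ * r) (hre : r ≤ K * t) :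
    K * t ≤ 4 * K ^ 2 * lam * σ ∧ L ≤ 4 * K ^ 2 * lam * σ ^ 2 := by
  have hre' := mul_le_mul_of_nonneg_left hre (by positivity : 0 ≤ 4 * lam * σ)
  have ht' : t ≤ 4 * K * lam * σ := by
    rcases ht.eq_or_lt with rfl | htpos
    · positivity
    · nlinarith [mul_nonneg hlam.le hL]
  refine ⟨by nlinarith, ?_⟩
  have : lam * L ≤ lam * (4 * K ^ 2 * lam * σ ^ 2) := by
    nlinarith [sq_nonneg (t - 2 * lam * σ * K)]
  exact le_of_mul_le_mul_left this hlam

end Lasso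

theorem stmt16_general (n p s : ℕ) (hn : 1 ≤ n) (hs : 1 ≤ s) (hsp : 2 * s ≤ p)
    (X : Matrix (Fin n) (Fin p) ℝ) (β βhat : Fin p → ℝ) (ε : Fin n → ℝ)
    (Y : Fin n → ℝ) (lam K : ℝ) (hlam : 0 < lam)
    (hK : 0 < K)
    (hY : Y = X.mulVec β + ε)
    (S : Finset (Fin p)) (hS : S = Finset.univ.filter fun j => β j ≠ 0)
    (hScard : S.card ≤ s)
    -- RE(s,3,X) with constant K = K(s,3,X)
    (hRE : ∀ J0 : Finset (Fin p), J0.card ≤ s → ∀ v : Fin p → ℝ, v ≠ 0 →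
      l1 (restr J0ᶜ v) ≤ 3 * l1 (restr J0 v) →
      Real.sqrt n * l2 (restr J0 v) ≤ K * l2 (X.mulVec v))
    -- β̂ minimizes the Lasso objective
    (hopt : ∀ b : Fin p → ℝ,
      (1 / (2 * n)) * (l2 (Y - X.mulVec βhat)) ^ 2 + lam * l1 βhat ≤
        (1 / (2 * n)) * (l2 (Y - X.mulVec b)) ^ 2 + lam * l1 b)
    -- ‖X^T ε / n‖_∞ ≤ λ/2
    (hnoise : ∀ j, |(∑ i, X i j * ε i) / n| ≤ lam / 2) :
    l2 (restr S (βhat - β)) ≤ 4 * K ^ 2 * lam * Real.sqrt s ∧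
      l1 (βhat - β) ≤ 4 * K ^ 2 * lam * s ∧
      l2 (βhat - β) ≤ 8 * K ^ 2 * lam * Real.sqrt s := by
  have hRE : RestrictedEigenvalue X s 3 K := hRE
  have hs' : (0 : ℝ) < s := by exact_mod_cast hs
  have hβ : ∀ j ∉ S, β j = 0 := fun j hj => by simpa [hS] using hj
  have hkey := lasso_prediction_error_add_l1_le hn hlam.le hY hβ (hopt β) hnoise
  set υ := βhat - β
  set t := l2 (X.mulVec υ) / Real.sqrt n
  have ht2 : t ^ 2 = l2 (X.mulVec υ) ^ 2 / n := by
    rw [div_pow, Real.sq_sqrt (Nat.cast_nonneg n)]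
  have hcone : l1 (restr Sᶜ υ) ≤ 3 * l1 (restr S υ) := by
    have : 0 ≤ t ^ 2 := sq_nonneg t
    nlinarith [l1_restr_add_l1_restr_compl S υ]
  have hCS : l1 (restr S υ) ≤ Real.sqrt s * l2 (restr S υ) :=
    (l1_restr_le_sqrt_card_mul_l2_restr S υ).trans (mul_le_mul_of_nonneg_right
      (Real.sqrt_le_sqrt (by exact_mod_cast hScard)) (l2_nonneg _))
  have hrS := hRE.l2_restr_le hn hScard hcone
  obtain ⟨hKt, hl1⟩ := bounds_of_sq_add_le_of_le_mul (t := t)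
    (div_nonneg (l2_nonneg _) (Real.sqrt_nonneg _)) (l1_nonneg υ) hlam hK.le
    (Real.sqrt_nonneg s) (by nlinarith) hrS
  rw [Real.sq_sqrt hs'.le] at hl1
  obtain ⟨T, hTcard, hconeT, htail⟩ :=
    exists_card_eq_cone_and_l2_restr_compl_le hs (by omega) hScard (by norm_num) hcone
  refine ⟨hrS.trans hKt, hl1, ?_⟩
  calc l2 υ ≤ l2 (restr T υ) + l2 (restr Tᶜ υ) := l2_le_l2_restr_add_l2_restr_compl T υ
    _ ≤ 4 * K ^ 2 * lam * Real.sqrt s + 4 * K ^ 2 * lam * s / Real.sqrt s := by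
      gcongr
      · exact (hRE.l2_restr_le hn hTcard.le hconeT).trans hKt
      · exact htail.trans (by gcongr)
    _ = 8 * K ^ 2 * lam * Real.sqrt s := by
      rw [mul_div_assoc, Real.div_sqrt]
      ring

/-- ℓ₂ and ℓ₁ bounds for the Lasso under RE(s,3,X):
‖υ_S‖₂ ≤ 4K²λ√s, ‖υ‖₁ ≤ 4K²λs, ‖υ‖₂ ≤ 8K²λ√s. -/
theorem stmt16 (n p s : ℕ) (hn : 1 ≤ n) (hs : 1 ≤ s) (hsp : 2 * s ≤ p)
    (X : Matrix (Fin n) (Fin p) ℝ) (β βhat : Fin p → ℝ) (ε : Fin n → ℝ)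
    (Y : Fin n → ℝ) (lam θ K : ℝ) (hlam : 0 < lam) (hθ0 : 0 < θ) (hθ1 : θ < 1)
    (hK : 0 < K)
    (hY : Y = X.mulVec β + ε)
    (S : Finset (Fin p)) (hS : S = Finset.univ.filter fun j => β j ≠ 0)
    (hScard : S.card ≤ s)
    -- RE(s,3,X) with constant K = K(s,3,X)
    (hRE : ∀ J0 : Finset (Fin p), J0.card ≤ s → ∀ v : Fin p → ℝ, v ≠ 0 →
      l1 (restr J0ᶜ v) ≤ 3 * l1 (restr J0 v) →
      Real.sqrt n * l2 (restr J0 v) ≤ K * l2 (X.mulVec v))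
    -- column normalization
    (hcol : ∀ j, l2 (fun i => X i j) ≤ (1 + θ) * Real.sqrt n)
    -- β̂ minimizes the Lasso objective
    (hopt : ∀ b : Fin p → ℝ,
      (1 / (2 * n)) * (l2 (Y - X.mulVec βhat)) ^ 2 + lam * l1 βhat ≤
        (1 / (2 * n)) * (l2 (Y - X.mulVec b)) ^ 2 + lam * l1 b)
    -- ‖X^T ε / n‖_∞ ≤ λ/2
    (hnoise : ∀ j, |(∑ i, X i j * ε i) / n| ≤ lam / 2) :
    l2 (restr S (βhat - β)) ≤ 4 * K ^ 2 * lam * Real.sqrt s ∧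
      l1 (βhat - β) ≤ 4 * K ^ 2 * lam * s ∧
      l2 (βhat - β) ≤ 8 * K ^ 2 * lam * Real.sqrt s :=
  stmt16_general n p s hn hs hsp X β βhat ε Y lam K hlam hK hY S hS hScard hRE hopt hnoise
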